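/- For all p, q ∈ ℂ with p ≠ 0, q ≠ 0 and p ≠ q: if L is a complex Lie algebra admitting a basis realizing the bracket pattern d₅(p,q,q) and L′ is a complex Lie algebra admitting a basis realizing the bracket pattern d₅(2,1,1), then L and L′ are isomorphic as Lie algebras over ℂ. -/

import Mathlib

/-!
In a basis `e₀, …, e₄` realizing `d₅(p,q,q)`, the vectors `u₀ = e₀`, `u₁ = e₀ + p e₁` and
`u₂ = e₀ + q e₁ + q(q - p) e₂` span an abelian ideal and are common eigenvectors of
`x ↦ ⁅x, e₃⁆` and `x ↦ ⁅x, e₄⁆`, with eigenvalue pairs `(0, 0)`, `(p, 0)` and `(q, q(q - p))`.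
When `p`, `q` and `p - q` are nonzero the last two pairs are linearly independent, so the dual
combinations `y₁, y₂` of `e₃, e₄` satisfy `⁅uᵢ, yⱼ⁆ = δᵢⱼ uᵢ`. Hence the algebra is
`ℂ ⊕ 𝔯₂ ⊕ 𝔯₂` whatever `p` and `q` are, and `(p, q) = (2, 1)` is one admissible choice.
-/

/-- `Realizes L c` means that the complex Lie algebra `L` admits a basis `e₁, …, e₅`
(indexed by `Fin 5`) in which the brackets of basis vectors are given by the
structure constants `c`, i.e. `⁅eᵢ, eⱼ⁆ = ∑ₖ c i j k • eₖ` for all `i < j`,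
all brackets of basis vectors being determined by these via antisymmetry. -/
def Realizes (L : Type) [LieRing L] [LieAlgebra ℂ L]
    (c : Fin 5 → Fin 5 → Fin 5 → ℂ) : Prop :=
  ∃ e : Module.Basis (Fin 5) ℂ L, ∀ i j : Fin 5, i < j →
    ⁅e i, e j⁆ = ∑ k, c i j k • e k

/-- The bracket pattern `d₅(p,q,r)` (indices shifted down by one so the basis is indexed by `Fin 5`): `[e₂,e₄]=e₁+p·e₂`, `[e₃,e₄]=e₂+q·e₃`, `[e₁,e₅]=p(q−r)·e₁`, `[e₂,e₅]=(r−q)·e₁`, `[e₃,e₅]=e₁+r·e₂−r(p−q)·e₃`, all other brackets zero. -/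
def d5 (p q r : ℂ) : Fin 5 → Fin 5 → Fin 5 → ℂ := fun i j =>
  if i = 1 ∧ j = 3 then ![1, p, 0, 0, 0]
  else if i = 2 ∧ j = 3 then ![0, 1, q, 0, 0]
  else if i = 0 ∧ j = 4 then ![p * (q - r), 0, 0, 0, 0]
  else if i = 1 ∧ j = 4 then ![r - q, 0, 0, 0, 0]
  else if i = 2 ∧ j = 4 then ![1, r, -(r * (p - q)), 0, 0]
  else 0

open Module Submodule

section
variable {R ι L L' : Type*} [CommRing R] [LinearOrder ι]
  [LieRing L] [LieAlgebra R L] [LieRing L'] [LieAlgebra R L']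

theorem LinearMap.map_lie_of_basis (g : L →ₗ[R] L') (e : Basis ι R L)
    (h : ∀ i j, i < j → g ⁅e i, e j⁆ = ⁅g (e i), g (e j)⁆) (x y : L) :
    g ⁅x, y⁆ = ⁅g x, g y⁆ := by
  let toEnd := (LieModule.toEnd R L L : L →ₗ[R] Module.End R L)
  let toEnd' := (LieModule.toEnd R L' L' : L' →ₗ[R] Module.End R L')
  suffices toEnd.compr₂ g = toEnd'.compl₁₂ g g from LinearMap.congr_fun₂ this x y
  refine LinearMap.ext_basis e e fun i j => ?_
  simp only [LinearMap.compr₂_apply, LinearMap.compl₁₂_apply, toEnd, toEnd',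
    LieHom.coe_toLinearMap, LieModule.toEnd_apply_apply]
  rcases lt_trichotomy i j with hij | rfl | hji
  · exact h i j hij
  · simp
  · rw [← lie_skew, map_neg, h j i hji, lie_skew]

variable [Fintype ι] {c : ι → ι → ι → R}

theorem Module.Basis.lie_eq_ite {e : Basis ι R L}
    (he : ∀ i j, i < j → ⁅e i, e j⁆ = ∑ k, c i j k • e k) (i j : ι) :
    ⁅e i, e j⁆ = if i < j then ∑ k, c i j k • e k
      else if j < i then -∑ k, c j i k • e k else 0 := by
  rcases lt_trichotomy i j with hij | rfl | hji
  · simp [hij, he i j hij]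
  · simp
  · simp [hji, hji.not_gt, ← he j i hji]

noncomputable def Module.Basis.lieEquivOfStructureConstants (e : Basis ι R L) (f : Basis ι R L')
    (he : ∀ i j, i < j → ⁅e i, e j⁆ = ∑ k, c i j k • e k)
    (hf : ∀ i j, i < j → ⁅f i, f j⁆ = ∑ k, c i j k • f k) : L ≃ₗ⁅R⁆ L' :=
  let g := e.equiv f (Equiv.refl ι)
  { g with
    map_lie' := fun {x y} => g.toLinearMap.map_lie_of_basis e (fun i j hij => by
      simp [g, he i j hij, hf i j hij]) x y }

end

theorem Realizes.nonempty_lieEquiv {L L' : Type} [LieRing L] [LieAlgebra ℂ L] [LieRing L']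
    [LieAlgebra ℂ L'] {c : Fin 5 → Fin 5 → Fin 5 → ℂ} (hL : Realizes L c) (hL' : Realizes L' c) :
    Nonempty (L ≃ₗ⁅ℂ⁆ L') :=
  let ⟨e, he⟩ := hL
  let ⟨f, hf⟩ := hL'
  ⟨e.lieEquivOfStructureConstants f he hf⟩

section
variable {K M : Type*} [Field K] [AddCommGroup M] [Module K M]

noncomputable def d5NormalFamily (e : Basis (Fin 5) K M) (p q : K) : Fin 5 → M :=
  ![e 0, e 0 + p • e 1, e 0 + q • e 1 + (q * (q - p)) • e 2,
    p⁻¹ • e 3 - (p * (q - p))⁻¹ • e 4, (q * (q - p))⁻¹ • e 4]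

theorem top_le_span_d5NormalFamily (e : Basis (Fin 5) K M) {p q : K} (hp : p ≠ 0) (hq : q ≠ 0)
    (hpq : p ≠ q) : ⊤ ≤ span K (Set.range (d5NormalFamily e p q)) := by
  set v := d5NormalFamily e p q
  set S := span K (Set.range v)
  have hqp : q - p ≠ 0 := sub_ne_zero.mpr hpq.symm
  have hv (i : Fin 5) : v i ∈ S := subset_span ⟨i, rfl⟩
  have h0 : e 0 ∈ S := hv 0
  have h1 : e 1 ∈ S := by
    convert smul_mem _ p⁻¹ (sub_mem (hv 1) h0) using 1
    simp only [v, d5NormalFamily, Matrix.cons_val]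
    match_scalars <;> field_simp; ring
  have h2 : e 2 ∈ S := by
    convert smul_mem _ (q * (q - p))⁻¹ (sub_mem (sub_mem (hv 2) h0) (smul_mem _ q h1)) using 1
    simp only [v, d5NormalFamily, Matrix.cons_val]
    match_scalars <;> field_simp <;> ring
  have h4 : e 4 ∈ S := by
    convert smul_mem _ (q * (q - p)) (hv 4) using 1
    simp only [v, d5NormalFamily, Matrix.cons_val]
    match_scalars; field_simp
  have h3 : e 3 ∈ S := by
    convert add_mem (smul_mem _ p (hv 3)) (smul_mem _ (q - p)⁻¹ h4) using 1
    simp only [v, d5NormalFamily, Matrix.cons_val]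
    match_scalars <;> field_simp; ring
  rw [← e.span_eq, span_le]
  rintro _ ⟨i, rfl⟩
  fin_cases i <;> assumption

end

/-- The structure constants of `ℂ ⊕ 𝔯₂ ⊕ 𝔯₂` in a basis `(z, x₁, x₂, y₁, y₂)` with
`⁅xᵢ, yᵢ⁆ = xᵢ`, where `𝔯₂` is the non-abelian two-dimensional Lie algebra. -/
def r2r2C : Fin 5 → Fin 5 → Fin 5 → ℂ := fun i j =>
  if i = 1 ∧ j = 3 then ![0, 1, 0, 0, 0]
  else if i = 2 ∧ j = 4 then ![0, 0, 1, 0, 0]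
  else 0

theorem lie_d5NormalFamily {L : Type} [LieRing L] [LieAlgebra ℂ L] {p q : ℂ} (hp : p ≠ 0)
    (hq : q ≠ 0) (hpq : p ≠ q) {e : Basis (Fin 5) ℂ L}
    (he : ∀ i j : Fin 5, i < j → ⁅e i, e j⁆ = ∑ k, d5 p q q i j k • e k) (i j : Fin 5)
    (hij : i < j) :
    ⁅d5NormalFamily e p q i, d5NormalFamily e p q j⁆ =
      ∑ k, r2r2C i j k • d5NormalFamily e p q k := by
  have hqp : q - p ≠ 0 := sub_ne_zero.mpr hpq.symm
  fin_cases i <;> fin_cases j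
  all_goals try exact absurd hij (by decide)
  all_goals
    simp only [d5NormalFamily, r2r2C, d5, Basis.lie_eq_ite he, lie_add, add_lie, lie_sub, sub_lie,
      lie_smul, smul_lie, Fin.sum_univ_five, Matrix.cons_val, Matrix.cons_val_zero,
      Matrix.cons_val_one, Fin.zero_eta, Fin.mk_one, Fin.reduceFinMk, Fin.reduceLT, Fin.reduceEq,
      ↓reduceIte, and_self, and_true, and_false, Pi.zero_apply, Fin.isValue, not_lt_zero,
      zero_lt_one]
    match_scalars <;> field_simp <;> ring

theorem Realizes.r2r2C_of_d5 {L : Type} [LieRing L] [LieAlgebra ℂ L] {p q : ℂ} (hp : p ≠ 0)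
    (hq : q ≠ 0) (hpq : p ≠ q) (h : Realizes L (d5 p q q)) : Realizes L r2r2C := by
  obtain ⟨e, he⟩ := h
  refine ⟨basisOfTopLeSpanOfCardEqFinrank _ (top_le_span_d5NormalFamily e hp hq hpq)
    (finrank_eq_card_basis e).symm, ?_⟩
  simpa using lie_d5NormalFamily hp hq hpq he

/-- For `p ≠ 0`, `q ≠ 0`, `p ≠ q`, a Lie algebra realizing `d₅(p,q,q)` is
isomorphic to one realizing `d₅(2,1,1)`. -/
theorem d5_pqq_iso_d5_211 (p q : ℂ) (hp : p ≠ 0) (hq : q ≠ 0) (hpq : p ≠ q)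
    (L L' : Type) [LieRing L] [LieAlgebra ℂ L] [LieRing L'] [LieAlgebra ℂ L']
    (hL : Realizes L (d5 p q q)) (hL' : Realizes L' (d5 2 1 1)) :
    Nonempty (L ≃ₗ⁅ℂ⁆ L') :=
  (hL.r2r2C_of_d5 hp hq hpq).nonempty_lieEquiv
    (hL'.r2r2C_of_d5 two_ne_zero one_ne_zero (by norm_num))
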